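/- For any groups G and H, the profinite completion Ĝ of G embeds as a closed subgroup into the profinite completion of the free product G ∗ H, via the map induced by the canonical inclusion G → G ∗ H. -/

import Mathlib

/-- The finite-index normal subgroups of `G`. -/
def FIN (G : Type*) [Group G] : Type _ :=
  {N : Subgroup G // N.Normal ∧ N.FiniteIndex}

instance FIN.normal {G : Type*} [Group G] (N : FIN G) : N.1.Normal := N.2.1

instance FIN.finiteIndex {G : Type*} [Group G] (N : FIN G) : N.1.FiniteIndex := N.2.2

/-- Finite quotients of `G` carry the discrete topology. -/
instance finQuotTop {G : Type*} [Group G] (N : FIN G) : TopologicalSpace (G ⧸ N.1) := ⊥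

instance finQuotDiscrete {G : Type*} [Group G] (N : FIN G) :
    DiscreteTopology (G ⧸ N.1) := ⟨rfl⟩

/-- The transition map between finite quotients of `G`. -/
def finTrans {G : Type*} [Group G] (N M : FIN G) (h : N.1 ≤ M.1) :
    (G ⧸ N.1) →* (G ⧸ M.1) :=
  QuotientGroup.map N.1 M.1 (MonoidHom.id G) (by simpa using h)

/-- The profinite completion of `G`, as the subgroup of compatible families in the
product of all finite quotients of `G`. -/
def profiniteCompletionSubgroup (G : Type*) [Group G] :
    Subgroup (∀ N : FIN G, G ⧸ N.1) where
  carrier := {x | ∀ (N M : FIN G) (h : N.1 ≤ M.1), finTrans N M h (x N) = x M}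
  one_mem' := by intro N M h; simp [map_one]
  mul_mem' := by
    intro x y hx hy N M h
    have : (x * y) N = x N * y N := rfl
    rw [this, map_mul, hx N M h, hy N M h]
    rfl
  inv_mem' := by
    intro x hx N M h
    have : (x⁻¹) N = (x N)⁻¹ := rfl
    rw [this, map_inv, hx N M h]
    rfl

/-- The profinite completion of a group `G`, as a topological group. -/
def ProfiniteCompletion (G : Type*) [Group G] : Type _ :=
  ↥(profiniteCompletionSubgroup G)

instance (G : Type*) [Group G] : Group (ProfiniteCompletion G) :=
  inferInstanceAs (Group ↥(profiniteCompletionSubgroup G))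

instance finQuotTopGroup {G : Type*} [Group G] (N : FIN G) :
    IsTopologicalGroup (G ⧸ N.1) :=
  { continuous_mul := continuous_of_discreteTopology
    continuous_inv := continuous_of_discreteTopology }

instance (G : Type*) [Group G] : TopologicalSpace (ProfiniteCompletion G) :=
  inferInstanceAs (TopologicalSpace ↥(profiniteCompletionSubgroup G))

instance (G : Type*) [Group G] : IsTopologicalGroup (ProfiniteCompletion G) :=
  inferInstanceAs (IsTopologicalGroup ↥(profiniteCompletionSubgroup G))

/-- The canonical map from `G` to its profinite completion. -/
def toProfiniteCompletion (G : Type*) [Group G] : G →* ProfiniteCompletion G where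
  toFun g := ⟨fun N => QuotientGroup.mk g, by
    intro N M h
    simp [finTrans, finQuotTop]⟩
  map_one' := rfl
  map_mul' g₁ g₂ := rfl


section Aux

variable {G K : Type*} [Group G] [Group K]

/-- Pullback of a finite-index normal subgroup along a homomorphism. -/
@[reducible] def FIN.comap (phi : G →* K) (N : FIN K) : FIN G :=
  ⟨Subgroup.comap phi N.1, Subgroup.Normal.comap N.2.1 phi, by
    have hinj : Function.Injective
        (QuotientGroup.map (Subgroup.comap phi N.1) N.1 phi le_rfl) := by
      intro a b
      refine Quotient.inductionOn₂' a b ?_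
      intro a b hab
      have : (phi a)⁻¹ * phi b ∈ N.1 := QuotientGroup.eq.mp hab
      refine QuotientGroup.eq.mpr ?_
      simpa using this
    have : Finite (G ⧸ Subgroup.comap phi N.1) := Finite.of_injective _ hinj
    exact Subgroup.finiteIndex_of_finite_quotient⟩

/-- The homomorphism on profinite completions induced by `phi : G →* K`. -/
def inducedPC (phi : G →* K) : ProfiniteCompletion G →* ProfiniteCompletion K where
  toFun x := ⟨fun N => QuotientGroup.map (Subgroup.comap phi N.1) N.1 phi le_rfl
      (x.1 (FIN.comap phi N)), by
    intro N M h
    show finTrans N M h (QuotientGroup.map (Subgroup.comap phi N.1) N.1 phi le_rfl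
        (x.1 (FIN.comap phi N)))
      = QuotientGroup.map (Subgroup.comap phi M.1) M.1 phi le_rfl (x.1 (FIN.comap phi M))
    obtain ⟨g, hg⟩ := QuotientGroup.mk'_surjective _ (x.1 (FIN.comap phi N))
    have hx := x.2 (FIN.comap phi N) (FIN.comap phi M) (Subgroup.comap_mono h)
    rw [← hg] at hx ⊢
    rw [← hx]
    rfl⟩
  map_one' := by
    apply Subtype.ext; funext N
    show QuotientGroup.map _ _ _ _ ((1 : ProfiniteCompletion G).1 (FIN.comap phi N)) = _
    have : (1 : ProfiniteCompletion G).1 (FIN.comap phi N) = 1 := rfl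
    rw [this, map_one]
    rfl
  map_mul' x y := by
    apply Subtype.ext; funext N
    show QuotientGroup.map _ _ _ _ ((x * y : ProfiniteCompletion G).1 (FIN.comap phi N)) = _
    have : (x * y : ProfiniteCompletion G).1 (FIN.comap phi N)
        = x.1 (FIN.comap phi N) * y.1 (FIN.comap phi N) := rfl
    rw [this, map_mul]
    rfl

theorem inducedPC_continuous (phi : G →* K) : Continuous (inducedPC phi) := by
  apply Continuous.subtype_mk
  apply continuous_pi
  intro N
  letI : TopologicalSpace (G ⧸ (FIN.comap phi N).1) := finQuotTop (FIN.comap phi N)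
  haveI : DiscreteTopology (G ⧸ (FIN.comap phi N).1) := finQuotDiscrete (FIN.comap phi N)
  exact (continuous_of_discreteTopology (α := G ⧸ (FIN.comap phi N).1) :
      Continuous (QuotientGroup.map (Subgroup.comap phi N.1) N.1 phi le_rfl)).comp
    ((continuous_apply (FIN.comap phi N)).comp continuous_subtype_val)

theorem inducedPC_toProfinite (phi : G →* K) (g : G) :
    inducedPC phi (toProfiniteCompletion G g) = toProfiniteCompletion K (phi g) := by
  apply Subtype.ext; funext N
  rfl

instance pcT2 (G : Type*) [Group G] : T2Space (ProfiniteCompletion G) :=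
  inferInstanceAs (T2Space ↥(profiniteCompletionSubgroup G))

end Aux

/-- For any groups `G` and `H`, the profinite completion of `G` embeds as a closed
subgroup into the profinite completion of the free product `G ∗ H`, via the map induced
by the canonical inclusion `G → G ∗ H`. -/
theorem stmt_18 (G H : Type*) [Group G] [Group H] :
    ∃ f : ProfiniteCompletion G →* ProfiniteCompletion (Monoid.Coprod G H),
      Topology.IsClosedEmbedding f ∧
      (∀ g : G, f (toProfiniteCompletion G g)
        = toProfiniteCompletion (Monoid.Coprod G H) (Monoid.Coprod.inl g)) := by
  classical
  let pi : Monoid.Coprod G H →* G := Monoid.Coprod.lift (MonoidHom.id G) 1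
  have hpi : ∀ g : G, pi (Monoid.Coprod.inl g) = g := by
    intro g; simp [pi]
  refine ⟨inducedPC (Monoid.Coprod.inl : G →* Monoid.Coprod G H), ?_, fun g =>
    inducedPC_toProfinite _ g⟩
  have hleft : Function.LeftInverse (inducedPC pi)
      (inducedPC (Monoid.Coprod.inl : G →* Monoid.Coprod G H)) := by
    intro x
    apply Subtype.ext; funext N
    set N1 : FIN G := FIN.comap (Monoid.Coprod.inl : G →* Monoid.Coprod G H)
      (FIN.comap pi N) with hN1
    show QuotientGroup.map _ _ pi le_rfl
        (QuotientGroup.map _ _ (Monoid.Coprod.inl : G →* Monoid.Coprod G H) le_rfl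
          (x.1 N1)) = x.1 N
    have hle : N1.1 ≤ N.1 := by
      intro g hg
      have : pi (Monoid.Coprod.inl g) ∈ N.1 := hg
      rwa [hpi] at this
    obtain ⟨g, hg⟩ := QuotientGroup.mk'_surjective _ (x.1 N1)
    have hx := x.2 N1 N hle
    rw [← hg] at hx ⊢
    rw [← hx]
    show QuotientGroup.mk (pi (Monoid.Coprod.inl g)) = _
    rw [hpi]
    rfl
  exact hleft.isClosedEmbedding (inducedPC_continuous pi)
    (inducedPC_continuous _)
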